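/- arXiv:0704.1755 — 2 statements merged into one kernel-verified Lean document; each statement's English description precedes it below -/
import Mathlib

section
/- Let f, g: A → E be ρ-derivations (f(xy) = ρ(x)f(y) + f(x)ρ(y), and likewise for g), let L: A → E be ℂ-linear with ∂L(x,y) = g(x)f(y) for all x, y, and let T: A → E be ℂ-linear with ∂T(x,y) = f(x)g(y) for all x, y. Then the ℂ-bilinear map φ(x,y) := f(x)L(y) + T(x)f(y) is a Hochschild 2-cocycle: ∂φ = 0. -/
/-- If `f, g` are ρ-derivations, `∂L(x,y) = g(x)f(y)` and `∂T(x,y) = f(x)g(y)`,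
then `φ(x,y) := f(x)L(y) + T(x)f(y)` is a Hochschild 2-cocycle: `∂φ = 0`. -/
theorem two_cocycle_f_L_plus_T_f
    {A E : Type*} [Ring A] [Algebra ℂ A] [Ring E] [Algebra ℂ E]
    (ρ : A →ₐ[ℂ] E)
    (f g L T : A →ₗ[ℂ] E)
    (hf : ∀ x y : A, f (x * y) = ρ x * f y + f x * ρ y)
    (hg : ∀ x y : A, g (x * y) = ρ x * g y + g x * ρ y)
    (hL : ∀ x y : A, L (x * y) - ρ x * L y - L x * ρ y = g x * f y)
    (hT : ∀ x y : A, T (x * y) - ρ x * T y - T x * ρ y = f x * g y)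
    (φ : A → A → E)
    (hφ : ∀ x y : A, φ x y = f x * L y + T x * f y) :
    ∀ x y z : A,
      ρ x * φ y z - φ (x * y) z + φ x (y * z) - φ x y * ρ z = 0 := by
  intro x y z
  have hL' : ∀ a b : A, L (a * b) = ρ a * L b + L a * ρ b + g a * f b := by
    intro a b; have := hL a b; rw [sub_sub, sub_eq_iff_eq_add] at this; rw [this]; abel
  have hT' : ∀ a b : A, T (a * b) = ρ a * T b + T a * ρ b + f a * g b := by
    intro a b; have := hT a b; rw [sub_sub, sub_eq_iff_eq_add] at this; rw [this]; abel
  simp only [hφ, hf, hL', hT', map_mul]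
  noncomm_ring
end

section
/- Let f, g: A → E be ρ-derivations, let L, T: A → E be ℂ-linear with ∂L(x,y) = g(x)f(y) and ∂T(x,y) = f(x)g(y), let S: A → E be ℂ-linear with ∂S(x,y) = f(x)L(y) + T(x)f(y), and let S': A → E be ℂ-linear with ∂S'(x,y) = L(x)g(y) + g(x)T(y), all identities holding for all x, y ∈ A. Then the ℂ-bilinear map φ(x,y) := L(x)L(y) + g(x)S(y) + S'(x)f(y) is a Hochschild 2-cocycle: ∂φ = 0. -/
/-- With `f, g` ρ-derivations, `∂L(x,y) = g(x)f(y)`, `∂T(x,y) = f(x)g(y)`,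
`∂S(x,y) = f(x)L(y) + T(x)f(y)` and `∂S'(x,y) = L(x)g(y) + g(x)T(y)`, the bilinear map
`φ(x,y) := L(x)L(y) + g(x)S(y) + S'(x)f(y)` is a Hochschild 2-cocycle: `∂φ = 0`. -/
theorem two_cocycle_LL_gS_S'f
    {A E : Type*} [Ring A] [Algebra ℂ A] [Ring E] [Algebra ℂ E]
    (ρ : A →ₐ[ℂ] E)
    (f g L T S S' : A →ₗ[ℂ] E)
    (hf : ∀ x y : A, f (x * y) = ρ x * f y + f x * ρ y)
    (hg : ∀ x y : A, g (x * y) = ρ x * g y + g x * ρ y)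
    (hL : ∀ x y : A, L (x * y) - ρ x * L y - L x * ρ y = g x * f y)
    (hT : ∀ x y : A, T (x * y) - ρ x * T y - T x * ρ y = f x * g y)
    (hS : ∀ x y : A, S (x * y) - ρ x * S y - S x * ρ y = f x * L y + T x * f y)
    (hS' : ∀ x y : A, S' (x * y) - ρ x * S' y - S' x * ρ y = L x * g y + g x * T y)
    (φ : A → A → E)
    (hφ : ∀ x y : A, φ x y = L x * L y + g x * S y + S' x * f y) :
    ∀ x y z : A,
      ρ x * φ y z - φ (x * y) z + φ x (y * z) - φ x y * ρ z = 0 := by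
  intro x y z
  have hL' : ∀ a b : A, L (a * b) = ρ a * L b + L a * ρ b + g a * f b := by
    intro a b; have h := hL a b
    rw [sub_sub, sub_eq_iff_eq_add] at h; rw [h]; abel
  have hT' : ∀ a b : A, T (a * b) = ρ a * T b + T a * ρ b + f a * g b := by
    intro a b; have h := hT a b
    rw [sub_sub, sub_eq_iff_eq_add] at h; rw [h]; abel
  have hS2 : ∀ a b : A, S (a * b) = ρ a * S b + S a * ρ b + (f a * L b + T a * f b) := by
    intro a b; have h := hS a b
    rw [sub_sub, sub_eq_iff_eq_add] at h; rw [h]; abel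
  have hS'2 : ∀ a b : A, S' (a * b) = ρ a * S' b + S' a * ρ b + (L a * g b + g a * T b) := by
    intro a b; have h := hS' a b
    rw [sub_sub, sub_eq_iff_eq_add] at h; rw [h]; abel
  simp only [hφ, hL', hT', hS2, hS'2, hf, hg]
  noncomm_ring
end
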